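/- Let f be a density in 𝓛₀ and let F be the probability measure on [0,∞) with density f, i.e., F(A) = ∫_A f(y) dy. Then for every d > 0, F((x, x+d]) ~ d·f(x) as x → ∞, i.e., F((x, x+d])/(d f(x)) → 1. -/

import Mathlib

open MeasureTheory Filter Set

noncomputable section

/-- A probability density supported on `[0, ∞)`. -/
def IsDensity (f : ℝ → ℝ) : Prop :=
  Measurable f ∧ (∀ x < (0:ℝ), f x = 0) ∧ (∀ x : ℝ, 0 ≤ f x) ∧
    ∫ y in Set.Ioi (0:ℝ), f y = 1

/-- The long-tailed density class `𝓛₀`. -/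
def LongTailedDensity (f : ℝ → ℝ) : Prop :=
  (∀ᶠ x in atTop, 0 < f x) ∧
  ∀ t : ℝ, Tendsto (fun x => f (x + t) / f x) atTop (nhds 1)

/-- The subexponential density class `𝓢₀`. -/
def SubexpDensity (f : ℝ → ℝ) : Prop :=
  LongTailedDensity f ∧
  Tendsto (fun x => (∫ y in (0:ℝ)..x, f (x - y) * f y) / f x) atTop (nhds 2)

/-- The local mass `F((x, x+d])` of a measure, as a real number. -/
def locMass (F : Measure ℝ) (d x : ℝ) : ℝ := (F (Set.Ioc x (x + d))).toReal

/-- `F ∈ 𝓛_{Δ_d}`. -/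
def MemLdelta (F : Measure ℝ) (d : ℝ) : Prop :=
  (∀ᶠ x in atTop, 0 < locMass F d x) ∧
  ∀ t > (0:ℝ), ∀ ε > (0:ℝ), ∀ᶠ x in atTop, ∀ s : ℝ, |s| ≤ t →
    |locMass F d (x + s) / locMass F d x - 1| ≤ ε

/-- Convolution of two measures on `ℝ`: the law of the sum of two
independent random variables with laws `F` and `G`. -/
def mconv (F G : Measure ℝ) : Measure ℝ :=
  Measure.map (fun p : ℝ × ℝ => p.1 + p.2) (F.prod G)

/-- `F ∈ 𝓢_{Δ_d}`. -/
def MemSdelta (F : Measure ℝ) (d : ℝ) : Prop :=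
  MemLdelta F d ∧
  Tendsto (fun x => locMass (mconv F F) d x / locMass F d x) atTop (nhds 2)

/-- The probability measure on `[0,∞)` with density `f`. -/
def densMeasure (f : ℝ → ℝ) : Measure ℝ :=
  volume.withDensity (fun y => ENNReal.ofReal (f y))

/-!
By Egorov's theorem, along any sequence `xₙ → ∞` the convergence `f (xₙ + s) / f xₙ → 1` is
uniform in `s` outside a set of small measure. Given `tₙ ∈ [0, d]`, a point `s` that is good both
for `xₙ` and for `xₙ + tₙ` exists for measure reasons, and dividing the two ratios at `xₙ + s` shows
`f (xₙ + tₙ) / f xₙ → 1`: the convergence is uniform on `[0, d]` (uniform convergence theorem).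
Dominated convergence then gives `∫₀ᵈ f (x + t) / f x dt → d`, while
`F((x, x + d]) = ∫₀ᵈ f (x + t) dt`.
-/

open Topology Uniformity

theorem TendstoUniformlyOn.tendsto_comp_of_mem {ι α β : Type*} [UniformSpace β] {p : Filter ι}
    {F : ι → α → β} {c : β} {S : Set α} (h : TendstoUniformlyOn F (fun _ => c) p S)
    {s : ι → α} (hs : ∀ᶠ i in p, s i ∈ S) : Tendsto (fun i => F i (s i)) p (𝓝 c) :=
  have h' : Tendsto (fun q : ι × α => (c, F q.1 q.2)) (p ×ˢ 𝓟 S) (𝓤 β) :=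
    tendstoUniformlyOn_iff_tendstoUniformlyOnFilter.1 h
  Uniform.tendsto_nhds_right.2 <| h'.comp (tendsto_id.prodMk (tendsto_principal.2 hs))

theorem exists_mem_notMem_and_sub_notMem {G : Type*} [MeasurableSpace G] [AddGroup G]
    [MeasurableAdd G] {μ : Measure G} [μ.IsAddRightInvariant] {I E₁ E₂ : Set G} (t : G)
    (h : μ E₁ + μ E₂ < μ I) : ∃ s ∈ I, s ∉ E₁ ∧ s - t ∉ E₂ := by
  by_contra! hI
  have hcover : I ⊆ E₁ ∪ (· + -t) ⁻¹' E₂ := fun s hs => by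
    by_cases hs₁ : s ∈ E₁
    · exact Or.inl hs₁
    · exact Or.inr (by simpa [sub_eq_add_neg] using hI s hs hs₁)
  refine h.not_ge ((measure_mono (μ := μ) hcover).trans ?_)
  simpa only [measure_preimage_add_right] using measure_union_le (μ := μ) E₁ ((· + -t) ⁻¹' E₂)

section LongTailed

variable {f : ℝ → ℝ}

theorem exists_volume_le_tendstoUniformlyOn_ratio (hm : Measurable f)
    (hL : ∀ t : ℝ, Tendsto (fun x => f (x + t) / f x) atTop (𝓝 1))
    {x : ℕ → ℝ} (hx : Tendsto x atTop atTop) (a b : ℝ) {η : ℝ} (hη : 0 < η) :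
    ∃ E, volume E ≤ ENNReal.ofReal η ∧
      TendstoUniformlyOn (fun n s => f (x n + s) / f (x n)) (fun _ => 1) atTop (Icc a b \ E) := by
  obtain ⟨E, -, -, hE, hunif⟩ := tendstoUniformlyOn_of_ae_tendsto (μ := volume)
    (fun n => ((hm.comp (measurable_const_add (x n))).div_const _).stronglyMeasurable)
    stronglyMeasurable_const measurableSet_Icc measure_Icc_lt_top.ne
    (ae_of_all _ fun s _ => (hL s).comp hx) hη
  exact ⟨E, hE, hunif⟩

theorem LongTailedDensity.tendsto_ratio_of_mem_Icc (hf : LongTailedDensity f) (hm : Measurable f)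
    {d : ℝ} (hd : 0 < d) {x t : ℕ → ℝ} (hx : Tendsto x atTop atTop) (ht : ∀ n, t n ∈ Icc 0 d) :
    Tendsto (fun n => f (x n + t n) / f (x n)) atTop (𝓝 1) := by
  have hy : Tendsto (fun n => x n + t n) atTop atTop :=
    hx.atTop_add_nonneg fun n => (ht n).1
  obtain ⟨E₁, hE₁, hunif₁⟩ := exists_volume_le_tendstoUniformlyOn_ratio hm hf.2 hx 0 (2 * d)
    (η := d / 3) (by positivity)
  obtain ⟨E₂, hE₂, hunif₂⟩ := exists_volume_le_tendstoUniformlyOn_ratio hm hf.2 hy 0 d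
    (η := d / 3) (by positivity)
  have hsmall : ∀ n, volume E₁ + volume E₂ < volume (Icc (t n) (t n + d)) := fun n =>
    calc volume E₁ + volume E₂ ≤ ENNReal.ofReal (d / 3) + ENNReal.ofReal (d / 3) :=
          add_le_add hE₁ hE₂
      _ = ENNReal.ofReal (2 * d / 3) := by
          rw [← ENNReal.ofReal_add (by positivity) (by positivity)]
          ring_nf
      _ < volume (Icc (t n) (t n + d)) := by
          rw [Real.volume_Icc, add_sub_cancel_left]
          exact (ENNReal.ofReal_lt_ofReal_iff hd).2 (by linarith)
  -- A point `s n` outside both exceptional sets links the ratio at `x n` with the one at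
  -- `x n + t n`; it exists because both sets are too small to cover `[t n, t n + d]`.
  choose s hs hs₁ hs₂ using fun n => exists_mem_notMem_and_sub_notMem (t n) (hsmall n)
  have h₁ : Tendsto (fun n => f (x n + s n) / f (x n)) atTop (𝓝 1) :=
    hunif₁.tendsto_comp_of_mem <| .of_forall fun n =>
      ⟨⟨by linarith [(ht n).1, (hs n).1], by linarith [(ht n).2, (hs n).2]⟩, hs₁ n⟩
  have h₂ : Tendsto (fun n => f (x n + s n) / f (x n + t n)) atTop (𝓝 1) := by
    simpa only [add_add_sub_cancel] using hunif₂.tendsto_comp_of_mem (s := fun n => s n - t n) <|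
      .of_forall fun n =>
        ⟨⟨by linarith [(hs n).1], by linarith [(hs n).2]⟩, hs₂ n⟩
  obtain ⟨X, hX⟩ := eventually_atTop.1 hf.1
  have hquot := h₁.div h₂ one_ne_zero
  rw [div_one] at hquot
  refine hquot.congr' ?_
  filter_upwards [hx.eventually_ge_atTop X] with n hn
  have hxs : 0 < f (x n + s n) := hX _ (by linarith [(ht n).1, (hs n).1])
  have hxt : 0 < f (x n + t n) := hX _ (by linarith [(ht n).1])
  simp only [Pi.div_apply]
  field_simp

theorem LongTailedDensity.tendstoUniformlyOn_ratio (hf : LongTailedDensity f) (hm : Measurable f)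
    {d : ℝ} (hd : 0 < d) :
    TendstoUniformlyOn (fun x t => f (x + t) / f x) (fun _ => 1) atTop (Icc 0 d) := by
  rw [Metric.tendstoUniformlyOn_iff]
  intro ε hε
  by_contra hbad
  have hfreq := frequently_atTop.1 (not_eventually.1 hbad)
  push Not at hfreq
  choose x hx t ht hfar using fun n : ℕ => hfreq n
  have hlim := hf.tendsto_ratio_of_mem_Icc hm hd
    (tendsto_atTop_mono hx tendsto_natCast_atTop_atTop) ht
  obtain ⟨n, hn⟩ := (Metric.tendsto_nhds.1 hlim ε hε).exists
  exact (hfar n).not_gt (by rwa [dist_comm])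

theorem LongTailedDensity.tendsto_intervalIntegral_ratio (hf : LongTailedDensity f)
    (hm : Measurable f) {d : ℝ} (hd : 0 < d) :
    Tendsto (fun x => ∫ t in (0:ℝ)..d, f (x + t) / f x) atTop (𝓝 d) := by
  have hbound := Metric.tendstoUniformlyOn_iff.1 (hf.tendstoUniformlyOn_ratio hm hd) 1 one_pos
  have hdct := intervalIntegral.tendsto_integral_filter_of_dominated_convergence
    (μ := volume) (F := fun x t => f (x + t) / f x) (fun _ => 2)
    (.of_forall fun x => ((hm.comp (measurable_const_add x)).div_const _).aestronglyMeasurable)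
    (hbound.mono fun x hx => ae_of_all _ fun t ht => by
      have hclose := hx t (Ioc_subset_Icc_self (by rwa [uIoc_of_le hd.le] at ht))
      rw [Real.dist_eq, abs_sub_lt_iff] at hclose
      rw [Real.norm_eq_abs, abs_le]
      constructor <;> linarith)
    intervalIntegrable_const (ae_of_all _ fun t _ => hf.2 t)
  rwa [intervalIntegral.integral_const, sub_zero, smul_eq_mul, mul_one] at hdct

end LongTailed

theorem locMass_densMeasure {f : ℝ → ℝ} (hm : Measurable f) (hnn : ∀ x, 0 ≤ f x) {d : ℝ}
    (hd : 0 ≤ d) (x : ℝ) : locMass (densMeasure f) d x = ∫ t in (0:ℝ)..d, f (x + t) := by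
  rw [intervalIntegral.integral_comp_add_left, add_zero,
    intervalIntegral.integral_of_le (by linarith), locMass, densMeasure,
    withDensity_apply _ measurableSet_Ioc,
    integral_eq_lintegral_of_nonneg_ae (ae_of_all _ hnn) hm.aestronglyMeasurable]

theorem local_mass_asymptotic_of_long_tailed_density (f : ℝ → ℝ)
    (hf : IsDensity f) (hL : LongTailedDensity f) :
    ∀ d > (0:ℝ),
      Tendsto (fun x => locMass (densMeasure f) d x / (d * f x)) atTop (nhds 1) := by
  obtain ⟨hm, -, hnn, -⟩ := hf
  intro d hd
  have hmean := (hL.tendsto_intervalIntegral_ratio hm hd).div_const d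
  rw [div_self hd.ne'] at hmean
  refine hmean.congr fun x => ?_
  rw [locMass_densMeasure hm hnn hd.le, intervalIntegral.integral_div, div_div, mul_comm]
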